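/- arXiv:1211.6575 — 3 statements merged into one kernel-verified Lean document; each statement's English description precedes it below -/
import Mathlib

section
/- Let G be a finite nonabelian simple group and let K be a subgroup of a finite direct power G^m such that the projection of K to each coordinate copy of G is a proper subgroup of G. Then no composition factor (Jordan–Hölder factor) of K is isomorphic to G. -/
/-!
A composition factor `G` of `K` is a quotient `φ : L ↠ G` of some subgroup `L ≤ K`, and the
coordinate projections `ψ j : L → G` have kernels meeting trivially. Induct on the coordinates:
the image under `φ` of `ker (ψ a)` is normal in the simple group `G`. If it is trivial, `φ`
factors through `ψ a`, and since `G` is finite, `ψ a` must be onto. Otherwise `φ` is still onto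
on `ker (ψ a)`, and we pass to that subgroup with one coordinate fewer.
-/

/-- `IsCompositionFactorOf S K` : the group `S` appears (up to isomorphism) as a
factor of some composition series of `K`. -/
def IsCompositionFactorOf (S : Type*) [Group S] (K : Type*) [Group K] : Prop :=
  ∃ (n : ℕ) (c : ℕ → Subgroup K),
    c 0 = ⊥ ∧ c n = ⊤ ∧ (∀ i, i < n → c i ≤ c (i + 1)) ∧
    (∀ i, i < n → ∃ _ : ((c i).subgroupOf (c (i + 1))).Normal,
      IsSimpleGroup ((c (i + 1)) ⧸ (c i).subgroupOf (c (i + 1)))) ∧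
    ∃ i, i < n ∧ ∃ _ : ((c i).subgroupOf (c (i + 1))).Normal,
      Nonempty (((c (i + 1)) ⧸ (c i).subgroupOf (c (i + 1))) ≃* S)

namespace MonoidHom

variable {L G : Type*} [Group L] [Group G]

theorem surjective_of_ker_le_ker [Finite G] {φ ψ : L →* G} (hφ : Function.Surjective φ)
    (h : ψ.ker ≤ φ.ker) : Function.Surjective ψ := by
  have hdvd : Nat.card G ∣ Nat.card ψ.range := by
    rw [← Subgroup.index_ker, ← Subgroup.card_top (G := G), ← range_eq_top.mpr hφ,
      ← Subgroup.index_ker]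
    exact Subgroup.index_dvd_of_le h
  rw [← range_eq_top, ← Subgroup.card_eq_iff_eq_top]
  exact le_antisymm (Subgroup.card_le_card_group _) (Nat.le_of_dvd Nat.card_pos hdvd)

theorem exists_surjective_of_iInf_ker_le_finset [Finite G] [IsSimpleGroup G] {ι : Type*}
    (s : Finset ι) {φ : L →* G} (hφ : Function.Surjective φ) (ψ : ι → L →* G)
    (h : ⨅ i ∈ s, (ψ i).ker ≤ φ.ker) : ∃ i ∈ s, Function.Surjective (ψ i) := by
  classical
  induction s using Finset.induction_on generalizing L with
  | empty =>
    obtain ⟨g, hg⟩ := exists_ne (1 : G)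
    obtain ⟨x, rfl⟩ := hφ g
    exact absurd (h (by simp)) hg
  | insert a t _ ih =>
    have hnormal : ((ψ a).ker.map φ).Normal := (ψ a).normal_ker.map φ hφ
    rcases hnormal.eq_bot_or_eq_top with hbot | htop
    · exact ⟨a, by simp, surjective_of_ker_le_ker hφ ((Subgroup.map_eq_bot_iff _).mp hbot)⟩
    · set M := (ψ a).ker
      have hφM : Function.Surjective (φ.comp M.subtype) := by
        rwa [← range_eq_top, range_comp, Subgroup.range_subtype]
      obtain ⟨i, hi, hψi⟩ := ih hφM (fun i => (ψ i).comp M.subtype) (by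
        intro x hx
        simp only [Subgroup.mem_iInf, mem_ker, comp_apply] at hx ⊢
        exact h (by simpa [Subgroup.mem_iInf, forall_eq_or_imp] using ⟨x.2, hx⟩))
      exact ⟨i, by simp [hi], Function.Surjective.of_comp (g := M.subtype) hψi⟩

theorem exists_surjective_of_iInf_ker_le [Finite G] [IsSimpleGroup G] {ι : Type*} [Finite ι]
    {φ : L →* G} (hφ : Function.Surjective φ) (ψ : ι → L →* G) (h : ⨅ i, (ψ i).ker ≤ φ.ker) :
    ∃ i, Function.Surjective (ψ i) := by
  have := Fintype.ofFinite ι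
  obtain ⟨i, -, hi⟩ := exists_surjective_of_iInf_ker_le_finset Finset.univ hφ ψ (by simpa using h)
  exact ⟨i, hi⟩

end MonoidHom

theorem no_comp_factor_of_proper_projections_general (G : Type*) [Group G] [Finite G]
    [IsSimpleGroup G]
    (m : ℕ) (K : Subgroup (Fin m → G))
    (hproper : ∀ i : Fin m, ¬ Function.Surjective (fun k : K => (k : Fin m → G) i)) :
    ¬ IsCompositionFactorOf G K := by
  rintro ⟨n, c, -, -, -, -, i, -, _, ⟨e⟩⟩
  set L := c (i + 1)
  let φ : L →* G := e.toMonoidHom.comp (QuotientGroup.mk' _)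
  let ψ (j : Fin m) : L →* G := (Pi.evalMonoidHom (fun _ => G) j).comp (K.subtype.comp L.subtype)
  have hφ : Function.Surjective φ := e.surjective.comp (QuotientGroup.mk'_surjective _)
  have hψ : ⨅ j, (ψ j).ker ≤ φ.ker := by
    intro x hx
    have hx1 : x = 1 := by
      ext j
      exact Subgroup.mem_iInf.mp hx j
    simp [hx1]
  obtain ⟨j, hj⟩ := MonoidHom.exists_surjective_of_iInf_ker_le hφ ψ hψ
  exact hproper j (Function.Surjective.of_comp (g := L.subtype) hj)

/-- If every coordinate projection of `K ≤ G^m` is proper, then the finite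
nonabelian simple group `G` is not a composition factor of `K`. -/
theorem no_comp_factor_of_proper_projections (G : Type*) [Group G] [Finite G]
    [IsSimpleGroup G] (hna : ∃ a b : G, a * b ≠ b * a)
    (m : ℕ) (K : Subgroup (Fin m → G))
    (hproper : ∀ i : Fin m, ¬ Function.Surjective (fun k : K => (k : Fin m → G) i)) :
    ¬ IsCompositionFactorOf G K :=
  no_comp_factor_of_proper_projections_general G m K hproper
end

section
/- (P. Hall) Let G be a finite nonabelian simple group and F_2 the free group of rank 2. The largest r such that G^r is a quotient of F_2 equals the number of Aut(G)-orbits on generating pairs of G, i.e., r = ℓ/|Aut(G)| where ℓ = |{(a,b) ∈ G² : ⟨a,b⟩ = G}|. -/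
/-!
An epimorphism `F → Gʳ` is a family of `r` epimorphisms `fᵢ : F → G` whose product map is onto.
By Goursat's lemma, adjoining one more simple factor either keeps the product map onto or makes
the new coordinate factor as `ψ ∘ (f₁, …, f_r)`. A surjection `ψ : Gʳ → G` onto a group with
trivial center kills all coordinates but one and is an automorphism on that one, so the product
map is onto exactly when the `fᵢ` lie in distinct `Aut(G)`-orbits. For `F = F₂`, epimorphisms are
generating pairs, on which `Aut(G)` acts freely, so there are `ℓ / |Aut(G)|` orbits.
-/

open Function Subgroup MulAction

section SimpleGroup

variable {G : Type*} [Group G] [IsSimpleGroup G]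

theorem IsSimpleGroup.center_eq_bot_of_exists_mul_ne (h : ∃ a b : G, a * b ≠ b * a) :
    center G = ⊥ := by
  refine (center G).normal_of_characteristic.eq_bot_or_eq_top.resolve_right fun htop => ?_
  obtain ⟨a, b, hab⟩ := h
  exact hab (mem_center_iff.mp (htop ▸ mem_top a) b).symm

theorem MonoidHom.injective_of_surjective_of_isSimpleGroup {H : Type*} [Group H] [Nontrivial H]
    {f : G →* H} (hf : Surjective f) : Injective f := by
  refine f.ker_eq_bot_iff.mp (f.normal_ker.eq_bot_or_eq_top.resolve_right fun htop => ?_)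
  obtain ⟨y, hy⟩ := exists_ne (1 : H)
  obtain ⟨x, rfl⟩ := hf y
  exact hy (f.mem_ker.mp (htop ▸ mem_top x))

end SimpleGroup

theorem MonoidHom.normal_range_mulSingle {ι : Type*} [DecidableEq ι] {M : ι → Type*}
    [∀ i, Group (M i)] (i : ι) : (MonoidHom.mulSingle M i).range.Normal :=
  ⟨by
    rintro _ ⟨g, rfl⟩ x
    refine ⟨x i * g * (x i)⁻¹, funext fun j => ?_⟩
    by_cases h : j = i
    · subst h; simp
    · simp [h]⟩

/-- Goursat's lemma for a simple factor: `h (ker g)` is a normal subgroup of `G`. -/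
theorem MonoidHom.surjective_prod_or_exists_eq_comp {F A G : Type*} [Group F] [Group A] [Group G]
    [IsSimpleGroup G] {g : F →* A} {h : F →* G} (hg : Surjective g) (hh : Surjective h) :
    Surjective (g.prod h) ∨ ∃ ψ : A →* G, h = ψ.comp g := by
  rcases (g.normal_ker.map h hh).eq_bot_or_eq_top with hbot | htop
  · have hker : g.ker ≤ h.ker := (Subgroup.map_eq_bot_iff _).mp hbot
    exact .inr ⟨g.liftOfSurjective hg ⟨h, hker⟩, (g.liftOfRightInverse_comp _ _ ⟨h, hker⟩).symm⟩
  · refine .inl fun ⟨a, x⟩ => ?_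
    obtain ⟨y, rfl⟩ := hg a
    obtain ⟨z, hz, hzx⟩ : (h y)⁻¹ * x ∈ g.ker.map h := htop ▸ mem_top _
    exact ⟨y * z, by simp_all⟩

section PowerOfSimple

variable {ι F G : Type*} [Group F] [Group G] [IsSimpleGroup G]

/-- The images of the coordinate copies of `G` are normal and commute pairwise; since `G` has
trivial center, exactly one of them is nontrivial. -/
theorem MonoidHom.exists_eq_mulAut_comp_eval [Finite ι] (hG : center G = ⊥)
    {ψ : (ι → G) →* G} (hψ : Surjective ψ) :
    ∃ i, ∃ φ : MulAut G, ψ = φ.toMonoidHom.comp (Pi.evalMonoidHom (fun _ => G) i) := by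
  classical
  set ψ' : ι → G →* G := fun i => ψ.comp (MonoidHom.mulSingle (fun _ => G) i)
  obtain ⟨i, hi⟩ : ∃ i, Surjective (ψ' i) := by
    by_contra! hne
    have hψ1 : ψ = 1 := MonoidHom.pi_ext fun i x => by
      have hbot := ((normal_range_mulSingle i).map ψ hψ).eq_bot_or_eq_top.resolve_right
        (by rw [← MonoidHom.range_comp, MonoidHom.range_eq_top]; exact hne i)
      rw [← MonoidHom.range_comp, MonoidHom.range_eq_bot_iff] at hbot
      exact DFunLike.congr_fun hbot x
    obtain ⟨y, hy⟩ := exists_ne (1 : G)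
    obtain ⟨x, rfl⟩ := hψ y
    exact hy (by rw [hψ1, MonoidHom.one_apply])
  have htriv : ∀ j ≠ i, ∀ y, ψ' j y = 1 := fun j hji y => by
    have hcenter : ψ' j y ∈ center G := mem_center_iff.mpr fun z => by
      obtain ⟨x, rfl⟩ := hi z
      exact ((Pi.mulSingle_commute hji.symm x y).map ψ).eq
    rwa [hG, mem_bot] at hcenter
  refine ⟨i, MulEquiv.ofBijective (ψ' i) ⟨injective_of_surjective_of_isSimpleGroup hi, hi⟩,
    MonoidHom.pi_ext fun j y => ?_⟩
  by_cases hji : j = i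
  · subst hji
    show ψ _ = ψ (Pi.mulSingle j ((Pi.mulSingle j y : ι → G) j))
    rw [Pi.mulSingle_eq_same]
  · simpa [hji, ψ'] using htriv j hji y

theorem MonoidHom.surjective_pi_of_pairwise [Finite ι] (hG : center G = ⊥)
    {f : ι → F →* G} (hf : ∀ i, Surjective (f i))
    (hpair : Pairwise fun i j => ∀ φ : MulAut G, φ.toMonoidHom.comp (f i) ≠ f j) :
    Surjective (MonoidHom.pi f) := by
  induction ι using Finite.induction_empty_option with
  | of_equiv e ih =>
    intro x
    obtain ⟨y, hy⟩ := ih (fun a => hf (e a)) (hpair.comp_of_injective e.injective) (x ∘ e)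
    exact ⟨y, funext fun b => by simpa using congrFun hy (e.symm b)⟩
  | h_empty => exact fun x => ⟨1, Subsingleton.elim _ _⟩
  | h_option ih =>
    have hsome := ih (fun a => hf (some a)) (hpair.comp_of_injective (Option.some_injective _))
    rcases surjective_prod_or_exists_eq_comp hsome (hf none) with hprod | ⟨ψ, hψ⟩
    · intro x
      obtain ⟨y, hy⟩ := hprod (x ∘ some, x none)
      refine ⟨y, funext fun o => ?_⟩
      cases o with
      | none => exact congrArg Prod.snd hy
      | some a => exact congrFun (congrArg Prod.fst hy) a
    · have hψsurj : Surjective ψ := .of_comp (g := MonoidHom.pi fun a => f (some a)) <| by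
        rw [← MonoidHom.coe_comp, ← hψ]; exact hf none
      obtain ⟨a, φ, rfl⟩ := exists_eq_mulAut_comp_eval hG hψsurj
      exact absurd hψ.symm (hpair (Option.some_ne_none a) φ)

theorem MonoidHom.surjective_pi_iff [Finite ι] (hG : center G = ⊥) (f : ι → F →* G) :
    Surjective (MonoidHom.pi f) ↔ (∀ i, Surjective (f i)) ∧
      Pairwise fun i j => ∀ φ : MulAut G, φ.toMonoidHom.comp (f i) ≠ f j := by
  classical
  refine ⟨fun hf => ⟨fun i => (surjective_eval i).comp hf, fun i j hij φ hφ => ?_⟩,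
    fun h => surjective_pi_of_pairwise hG h.1 h.2⟩
  obtain ⟨g, hg⟩ := exists_ne (1 : G)
  obtain ⟨y, hy⟩ := hf (Pi.mulSingle j g)
  have hi : f i y = 1 := by simpa [hij] using congrFun hy i
  have hj : f j y = g := by simpa using congrFun hy j
  exact hg (by rw [← hj, ← hφ, MonoidHom.comp_apply, hi, map_one])

end PowerOfSimple

def SurjHom (F G : Type*) [Group F] [Group G] : Type _ := {f : F →* G // Surjective f}

namespace SurjHom

variable {F G : Type*} [Group F] [Group G]

instance : MulAction (MulAut G) (SurjHom F G) where
  smul φ f := ⟨φ.toMonoidHom.comp f.1, φ.surjective.comp f.2⟩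
  one_smul _ := rfl
  mul_smul _ _ _ := rfl

theorem stabilizer_eq_bot (f : SurjHom F G) : stabilizer (MulAut G) f = ⊥ := by
  refine (eq_bot_iff_forall _).mpr fun φ hφ => MulEquiv.ext fun g => ?_
  obtain ⟨x, rfl⟩ := f.2 g
  have hφf : φ • f = f := mem_stabilizer_iff.mp hφ
  exact DFunLike.congr_fun (congrArg Subtype.val hφf) x

theorem card_eq_card_orbits_mul_card :
    Nat.card (SurjHom F G) =
      Nat.card (orbitRel.Quotient (MulAut G) (SurjHom F G)) * Nat.card (MulAut G) := by
  rw [← Nat.card_prod]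
  exact Nat.card_congr (selfEquivOrbitsQuotientProd stabilizer_eq_bot)

theorem mk_eq_mk_iff {f g : SurjHom F G} :
    (⟦f⟧ : orbitRel.Quotient (MulAut G) (SurjHom F G)) = ⟦g⟧ ↔ ∃ φ : MulAut G, φ • g = f :=
  Quotient.eq.trans orbitRel_apply

theorem exists_surjective_pi_iff {ι : Type*} [Finite ι] [IsSimpleGroup G]
    (hG : center G = ⊥) :
    (∃ f : F →* (ι → G), Surjective f) ↔
      Nonempty (ι ↪ orbitRel.Quotient (MulAut G) (SurjHom F G)) := by
  constructor
  · rintro ⟨f, hf⟩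
    obtain ⟨hsurj, hpair⟩ := (MonoidHom.surjective_pi_iff hG
      fun i => (Pi.evalMonoidHom (fun _ => G) i).comp f).mp hf
    refine ⟨⟨fun i => ⟦⟨_, hsurj i⟩⟧, fun i j hij => ?_⟩⟩
    by_contra hne
    obtain ⟨φ, hφ⟩ := mk_eq_mk_iff.mp hij
    exact hpair (Ne.symm hne) φ (congrArg Subtype.val hφ)
  · rintro ⟨e⟩
    refine ⟨MonoidHom.pi fun i => (e i).out.1, (MonoidHom.surjective_pi_iff hG _).mpr
      ⟨fun i => (e i).out.2, fun i j hij φ hφ => hij (e.injective ?_)⟩⟩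
    rw [← Quotient.out_eq (e i), ← Quotient.out_eq (e j)]
    exact (mk_eq_mk_iff.mpr ⟨φ, Subtype.ext hφ⟩).symm

end SurjHom

def generatingPairsEquivSurjHom (G : Type*) [Group G] :
    {p : G × G // closure {p.1, p.2} = ⊤} ≃ SurjHom (FreeGroup (Fin 2)) G :=
  ((finTwoArrowEquiv G).symm.trans FreeGroup.lift).subtypeEquiv fun p => by
    simp [← MonoidHom.range_eq_top, FreeGroup.range_lift_eq_closure, Set.pair_comm]

/-- (P. Hall)  For a finite nonabelian simple group `G`, the largest `r` such
that `G^r` is a quotient of `F₂` equals `ℓ / |Aut(G)|`, where `ℓ` is the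
number of generating pairs of `G`. -/
theorem hall_largest_power_quotient (G : Type*) [Group G] [Finite G]
    [IsSimpleGroup G] (hna : ∃ a b : G, a * b ≠ b * a) :
    IsGreatest {r : ℕ | ∃ f : FreeGroup (Fin 2) →* (Fin r → G),
        Function.Surjective f}
      (Nat.card {p : G × G // Subgroup.closure {p.1, p.2} = ⊤} /
        Nat.card (MulAut G)) := by
  have hG := IsSimpleGroup.center_eq_bot_of_exists_mul_ne hna
  have : Finite (SurjHom (FreeGroup (Fin 2)) G) := .of_equiv _ (generatingPairsEquivSurjHom G)
  rw [Nat.card_congr (generatingPairsEquivSurjHom G), SurjHom.card_eq_card_orbits_mul_card,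
    Nat.mul_div_cancel _ Nat.card_pos]
  refine ⟨(SurjHom.exists_surjective_pi_iff hG).mpr ⟨(Finite.equivFin _).symm.toEmbedding⟩,
    fun r hr => ?_⟩
  obtain ⟨e⟩ := (SurjHom.exists_surjective_pi_iff hG).mp hr
  simpa using Nat.card_le_card_of_injective e e.injective
end

section
/- Let G be a finite nonabelian simple group and f : G × G → G a function such that (i) f(α(a), α(b)) = α(f(a,b)) for all α ∈ Aut(G) and a,b ∈ G, and (ii) f(a,b) = e whenever ⟨a,b⟩ ≠ G. Then there exists a word w ∈ F_2 such that f(a,b) = w(a,b) for all a,b ∈ G. -/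
/-!
For a tuple `p` generating `G` and a finite set `S` of tuples outside the `Aut(G)`-orbit of `p`,
the words vanishing at every `q ∈ S` take every value at `p`. When `q` is added to `S`, the image
`L` of these words under `w ↦ (w(q), w(p))` projects onto the second factor, so
`{g | (1, g) ∈ L}` is normal in `G`, hence `1` or `G`. It cannot be `1`: if `q` generates `G`,
Goursat's lemma and the orbit hypothesis make `w ↦ (w(q), w(p))` onto `G × G`, so `L` is normal
and `G` would be abelian; otherwise `L` would embed into the proper subgroup generated by `q`
while mapping onto `G`.

Hence a word agreeing with `f` on some orbits can be corrected on the orbit of `p` without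
changing it elsewhere, and equivariance spreads agreement at `p` over the whole orbit.
-/

open Function
open scoped commutatorElement

namespace Subgroup

variable {G H : Type*} [Group G] [Group H] {L : Subgroup (G × H)}

lemma eq_top_of_goursatSnd_eq_top (hL : Surjective (Prod.fst ∘ L.subtype))
    (h : L.goursatSnd = ⊤) : L = ⊤ := by
  refine (eq_top_iff' L).2 fun ⟨g, k⟩ => ?_
  obtain ⟨⟨⟨g, k'⟩, hx⟩, rfl⟩ := hL g
  have hk : ((1 : G), k'⁻¹ * k) ∈ L := mem_goursatSnd.1 (h ▸ mem_top _)
  simpa using mul_mem hx hk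

lemma commutatorElement_mem_goursatSnd (hL : L.Normal) {g : G} {k : H} (hx : (g, k) ∈ L)
    (s : H) : ⁅s, k⁆ ∈ L.goursatSnd := by
  rw [mem_goursatSnd]
  simpa [commutatorElement_def, mul_assoc] using mul_mem (hL.conj_mem _ hx (1, s)) (inv_mem hx)

lemma injective_fst_comp_subtype_of_goursatSnd_eq_bot (h : L.goursatSnd = ⊥) :
    Injective ((MonoidHom.fst G H).comp L.subtype) := by
  refine (injective_iff_map_eq_one _).2 fun ⟨⟨g, k⟩, hx⟩ hg => ?_
  obtain rfl : g = 1 := hg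
  obtain rfl : k = 1 := by simpa [h] using (mem_goursatSnd (I := L)).2 hx
  rfl

lemma card_le_card_map_fst_of_goursatSnd_eq_bot [Finite G]
    (hL : Surjective (Prod.snd ∘ L.subtype)) (h : L.goursatSnd = ⊥) :
    Nat.card H ≤ Nat.card (L.map (MonoidHom.fst G H)) := by
  have hinj := injective_fst_comp_subtype_of_goursatSnd_eq_bot h
  have : Finite L := Finite.of_injective _ hinj
  calc Nat.card H ≤ Nat.card L := Nat.card_le_card_of_surjective _ hL
    _ = Nat.card ((MonoidHom.fst G H).comp L.subtype).range :=
        Nat.card_congr (MonoidHom.ofInjective hinj).toEquiv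
    _ = Nat.card (L.map (MonoidHom.fst G H)) := by rw [MonoidHom.range_comp, range_subtype]

variable {F : Type*} [Group F] (φ : F →* G) (ψ : F →* H)

lemma goursatSnd_map_prod (K : Subgroup F) :
    (K.map (φ.prod ψ)).goursatSnd = (K ⊓ φ.ker).map ψ := by
  ext h
  simp [and_assoc]

lemma surjective_snd_comp_subtype_map_prod {K : Subgroup F} (hK : K.map ψ = ⊤) :
    Surjective (Prod.snd ∘ (K.map (φ.prod ψ)).subtype) := fun k => by
  obtain ⟨w, hw, rfl⟩ := hK.ge (mem_top k)
  exact ⟨⟨_, mem_map_of_mem _ hw⟩, rfl⟩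

end Subgroup

open Subgroup MulAction

namespace FreeGroup

variable {ι G : Type*} [Group G]

lemma lift_smul (α : MulAut G) (q : ι → G) (w : FreeGroup ι) :
    lift (α • q) w = α (lift q w) := by
  change lift (α • q) w = α.toMonoidHom.comp (lift q) w
  congr 1
  ext i
  simp

lemma mem_orbit_of_ker_lift_le [Finite G] {p q : ι → G} (hq : closure (Set.range q) = ⊤)
    (hp : closure (Set.range p) = ⊤) (h : (lift q).ker ≤ (lift p).ker) :
    p ∈ orbit (MulAut G) q := by
  let φ : G →* G := MonoidHom.liftOfSurjective (lift q)
    (lift_surjective_iff_closure_range_eq_top.2 hq) ⟨lift p, h⟩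
  have hφ (w : FreeGroup ι) : φ (lift q w) = lift p w :=
    MonoidHom.liftOfRightInverse_comp_apply _ _ _ _ w
  have hφ_surj : Surjective φ := fun g => by
    obtain ⟨w, rfl⟩ := lift_surjective_iff_closure_range_eq_top.2 hp g
    exact ⟨_, hφ w⟩
  refine ⟨MulEquiv.ofBijective φ ⟨Finite.injective_iff_surjective.2 hφ_surj, hφ_surj⟩, ?_⟩
  funext i
  change φ (q i) = p i
  simpa using hφ (of i)

variable [Finite G] [IsSimpleGroup G]

lemma surjective_prod_lift {p q : ι → G} (hq : closure (Set.range q) = ⊤)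
    (hp : closure (Set.range p) = ⊤) (hpq : p ∉ orbit (MulAut G) q) :
    Surjective ((lift q).prod (lift p)) := by
  rw [← MonoidHom.range_eq_top, MonoidHom.range_eq_map]
  set L := (⊤ : Subgroup (FreeGroup ι)).map ((lift q).prod (lift p))
  have hfst : Surjective (Prod.fst ∘ L.subtype) := fun g => by
    obtain ⟨w, rfl⟩ := lift_surjective_iff_closure_range_eq_top.2 hq g
    exact ⟨⟨_, mem_map_of_mem _ (mem_top w)⟩, rfl⟩
  have hsnd := surjective_snd_comp_subtype_map_prod (lift q) (lift p)
    (by rwa [← MonoidHom.range_eq_map, range_lift_eq_closure])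
  refine eq_top_of_goursatSnd_eq_top hfst <|
    (normal_goursatSnd hsnd).eq_bot_or_eq_top.resolve_left fun hbot => hpq ?_
  refine mem_orbit_of_ker_lift_le hq hp fun w hw => ?_
  have : lift p w ∈ L.goursatSnd := by
    rw [goursatSnd_map_prod]
    exact mem_map_of_mem _ ⟨mem_top w, hw⟩
  rwa [hbot, mem_bot] at this

lemma map_lift_iInf_ker_eq_top (hG : ∃ a b : G, a * b ≠ b * a) {p : ι → G}
    (hp : closure (Set.range p) = ⊤) {S : Set (ι → G)} (hS : S.Finite)
    (hpS : ∀ q ∈ S, q ∉ orbit (MulAut G) p) : (⨅ q ∈ S, (lift q).ker).map (lift p) = ⊤ := by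
  induction S, hS using Set.Finite.induction_on with
  | empty => simpa [← MonoidHom.range_eq_map, range_lift_eq_closure]
  | @insert q S _ _ ih =>
    set K := ⨅ q ∈ S, (lift q).ker
    have hK : K.map (lift p) = ⊤ := ih fun q' hq' => hpS q' (Set.mem_insert_of_mem _ hq')
    set L := K.map ((lift q).prod (lift p))
    have hsnd := surjective_snd_comp_subtype_map_prod (lift q) (lift p) hK
    rw [iInf_insert, inf_comm, ← goursatSnd_map_prod]
    refine (normal_goursatSnd hsnd).eq_bot_or_eq_top.resolve_left fun hbot => ?_
    by_cases hq : closure (Set.range q) = ⊤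
    · have hK_normal : K.Normal :=
        normal_iInf_normal fun q => normal_iInf_normal fun _ => (lift q).normal_ker
      have hL : L.Normal := hK_normal.map _ <| surjective_prod_lift hq hp <|
        mem_orbit_symm.not.1 (hpS q (Set.mem_insert q S))
      obtain ⟨a, b, hab⟩ := hG
      obtain ⟨⟨⟨g, b⟩, hx⟩, rfl⟩ := hsnd b
      have hab' := commutatorElement_mem_goursatSnd hL hx a
      rw [hbot, mem_bot, commutatorElement_eq_one_iff_mul_comm] at hab'
      exact hab hab'
    · apply hq
      refine eq_top_of_card_eq _ (le_antisymm (card_le_card_group _) ?_)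
      calc Nat.card G ≤ Nat.card (L.map (MonoidHom.fst G G)) :=
            card_le_card_map_fst_of_goursatSnd_eq_bot hsnd hbot
        _ ≤ Nat.card (closure (Set.range q)) := by
            refine card_le_of_le ?_
            rw [map_map, MonoidHom.fst_comp_prod, ← range_lift_eq_closure]
            exact map_le_range _ _

variable [Finite ι] (hG : ∃ a b : G, a * b ≠ b * a) {F : (ι → G) → G}
  (hF : ∀ (α : MulAut G) (v : ι → G), F (α • v) = α (F v))
include hG hF

lemma exists_lift_eq_on_orbit {p : ι → G} (hp : closure (Set.range p) = ⊤) (w : FreeGroup ι) :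
    ∃ w' : FreeGroup ι, ∀ v, (v ∈ orbit (MulAut G) p → F v = lift v w') ∧
      (v ∉ orbit (MulAut G) p → lift v w' = lift v w) := by
  obtain ⟨u, hu, hpu⟩ : (lift p w)⁻¹ * F p ∈
      (⨅ q ∈ (orbit (MulAut G) p)ᶜ, (lift q).ker).map (lift p) := by
    rw [map_lift_iInf_ker_eq_top hG hp (S := (orbit (MulAut G) p)ᶜ) (Set.toFinite _) fun _ => id]
    exact mem_top _
  refine ⟨w * u, fun v => ⟨?_, fun hv => ?_⟩⟩
  · rintro ⟨α, rfl⟩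
    rw [hF, lift_smul, _root_.map_mul, hpu, mul_inv_cancel_left]
  · rw [_root_.map_mul, (mem_iInf.1 (mem_iInf.1 hu v) hv : lift v u = 1), mul_one]

theorem exists_lift_eq_of_equivariant
    (h1 : ∀ v : ι → G, closure (Set.range v) ≠ ⊤ → F v = 1) :
    ∃ w : FreeGroup ι, ∀ v, F v = lift v w := by
  classical
  have := Fintype.ofFinite (ι → G)
  suffices ∀ T : Finset (ι → G), ∃ w : FreeGroup ι,
      ∀ v, v ∈ T ∨ closure (Set.range v) ≠ ⊤ → F v = lift v w by
    obtain ⟨w, hw⟩ := this Finset.univ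
    exact ⟨w, fun v => hw v (.inl (Finset.mem_univ v))⟩
  intro T
  induction T using Finset.induction_on with
  | empty => exact ⟨1, fun v hv => by simpa using h1 v (by simpa using hv)⟩
  | insert p T _ ih =>
    obtain ⟨w, hw⟩ := ih
    simp only [Finset.mem_insert, or_assoc]
    by_cases hp : closure (Set.range p) = ⊤
    · obtain ⟨w', hw'⟩ := exists_lift_eq_on_orbit hG hF hp w
      refine ⟨w', fun v hv => ?_⟩
      by_cases hvp : v ∈ orbit (MulAut G) p
      · exact (hw' v).1 hvp
      · rw [(hw' v).2 hvp]
        exact hw v (hv.resolve_left fun hvp' => hvp (hvp' ▸ mem_orbit_self v))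
    · refine ⟨w, fun v => ?_⟩
      rintro (rfl | hv)
      · exact hw v (.inr hp)
      · exact hw v hv

end FreeGroup

lemma Set.range_fin_two {α : Type*} (v : Fin 2 → α) : Set.range v = {v 0, v 1} := by
  ext
  simp [Fin.exists_fin_two, eq_comm]

/-- Any `Aut(G)`-equivariant function `G × G → G` which is trivial on
non-generating pairs is a word map, for `G` finite nonabelian simple. -/
theorem equivariant_function_is_word_map (G : Type*) [Group G] [Finite G]
    [IsSimpleGroup G] (hna : ∃ a b : G, a * b ≠ b * a)
    (f : G × G → G)
    (hequiv : ∀ α : MulAut G, ∀ a b : G, f (α a, α b) = α (f (a, b)))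
    (htriv : ∀ a b : G, Subgroup.closure {a, b} ≠ ⊤ → f (a, b) = 1) :
    ∃ w : FreeGroup (Fin 2), ∀ a b : G,
      f (a, b) = FreeGroup.lift ![a, b] w := by
  obtain ⟨w, hw⟩ := FreeGroup.exists_lift_eq_of_equivariant hna
    (F := fun v : Fin 2 → G => f (v 0, v 1)) (fun α v => hequiv α (v 0) (v 1))
    fun v hv => htriv (v 0) (v 1) (Set.range_fin_two v ▸ hv)
  exact ⟨w, fun a b => hw ![a, b]⟩
end
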